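/- arXiv:2310.12613 — 2 statements merged into one kernel-verified Lean document; each statement's English description precedes it below -/
import Mathlib

section
/- Let ψ₁ and ψ₂ be LTL formulas. (1) With B_GF := B_GF(ψ₁ W ψ₂), for every C ⊆ B_GF the formulas ψ₁ W ψ₂ and ψ₁ U (ψ₂ ∨ G(eval(ψ₁,C))) are equivalent under context ⟨C, B_GF⟩. (2) With B_GF := B_GF(ψ₁ R ψ₂), for every C ⊆ B_GF the formulas ψ₁ R ψ₂ and (ψ₁ ∨ G(eval(ψ₂,C))) M ψ₂ are equivalent under context ⟨C, B_GF⟩. -/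
namespace LTLNorm

/-- LTL formulas in negation normal form. -/
inductive F (Ap : Type) : Type
  | tt    : F Ap
  | ff    : F Ap
  | pos   : Ap → F Ap
  | nlit  : Ap → F Ap
  | and   : F Ap → F Ap → F Ap
  | or    : F Ap → F Ap → F Ap
  | next  : F Ap → F Ap
  | untl  : F Ap → F Ap → F Ap
  | wuntl : F Ap → F Ap → F Ap
  | rel   : F Ap → F Ap → F Ap
  | srel  : F Ap → F Ap → F Ap
  deriving DecidableEq

/-- Infinite words over the alphabet `2^Ap`. -/
abbrev Word (Ap : Type) := ℕ → Set Ap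

/-- Suffix of a word starting at position `i`. -/
def suff {Ap : Type} (w : Word Ap) (i : ℕ) : Word Ap := fun n => w (n + i)

/-- Satisfaction relation. -/
def Sat {Ap : Type} : Word Ap → F Ap → Prop
  | _, F.tt => True
  | _, F.ff => False
  | w, F.pos a => a ∈ w 0
  | w, F.nlit a => a ∉ w 0
  | w, F.and φ ψ => Sat w φ ∧ Sat w ψ
  | w, F.or φ ψ => Sat w φ ∨ Sat w ψ
  | w, F.next φ => Sat (suff w 1) φ
  | w, F.untl φ ψ => ∃ k, Sat (suff w k) ψ ∧ ∀ j < k, Sat (suff w j) φ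
  | w, F.wuntl φ ψ => (∀ k, Sat (suff w k) φ) ∨ ∃ k, Sat (suff w k) ψ ∧ ∀ j < k, Sat (suff w j) φ
  | w, F.srel φ ψ => ∃ k, Sat (suff w k) φ ∧ ∀ j ≤ k, Sat (suff w j) ψ
  | w, F.rel φ ψ => (∀ k, Sat (suff w k) ψ) ∨ ∃ k, Sat (suff w k) φ ∧ ∀ j ≤ k, Sat (suff w j) ψ

/-- Equivalence of formulas. -/
def Equiv {Ap : Type} (φ ψ : F Ap) : Prop := ∀ w : Word Ap, Sat w φ ↔ Sat w ψ

/-- Entailment: every word satisfying `φ` satisfies `ψ`. -/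
def Entails {Ap : Type} (φ ψ : F Ap) : Prop := ∀ w : Word Ap, Sat w φ → Sat w ψ

/-- F φ := tt U φ -/
def Ff {Ap : Type} (φ : F Ap) : F Ap := F.untl F.tt φ
/-- G φ := φ W ff -/
def Gf {Ap : Type} (φ : F Ap) : F Ap := F.wuntl φ F.ff
/-- GF φ := G (F φ) -/
def GFf {Ap : Type} (φ : F Ap) : F Ap := Gf (Ff φ)
/-- FG φ := F (G φ) -/
def FGf {Ap : Type} (φ : F Ap) : F Ap := Ff (Gf φ)

/-- Number of nodes of the syntax tree. -/
def size {Ap : Type} : F Ap → ℕ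
  | F.tt => 1
  | F.ff => 1
  | F.pos _ => 1
  | F.nlit _ => 1
  | F.and φ ψ => size φ + size ψ + 1
  | F.or φ ψ => size φ + size ψ + 1
  | F.next φ => size φ + 1
  | F.untl φ ψ => size φ + size ψ + 1
  | F.wuntl φ ψ => size φ + size ψ + 1
  | F.rel φ ψ => size φ + size ψ + 1
  | F.srel φ ψ => size φ + size ψ + 1

/-- The dual of a formula in negation normal form. -/
def dual {Ap : Type} : F Ap → F Ap
  | F.tt => F.ff
  | F.ff => F.tt
  | F.pos a => F.nlit a
  | F.nlit a => F.pos a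
  | F.and φ ψ => F.or (dual φ) (dual ψ)
  | F.or φ ψ => F.and (dual φ) (dual ψ)
  | F.next φ => F.next (dual φ)
  | F.untl φ ψ => F.rel (dual φ) (dual ψ)
  | F.rel φ ψ => F.untl (dual φ) (dual ψ)
  | F.wuntl φ ψ => F.srel (dual φ) (dual ψ)
  | F.srel φ ψ => F.wuntl (dual φ) (dual ψ)

/-- `LangC B C` is the set of words satisfying every formula of `C` and
no formula of `B \ C` (the language of the context `⟨C,B⟩`). -/
def LangC {Ap : Type} (B C : Finset (F Ap)) : Set (Word Ap) :=
  {w | (∀ ψ ∈ C, Sat w ψ) ∧ ∀ ψ ∈ B, ψ ∉ C → ¬ Sat w ψ}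

/-- Equivalence under the context `⟨C,B⟩`. -/
def EquivUnder {Ap : Type} (B C : Finset (F Ap)) (φ₁ φ₂ : F Ap) : Prop :=
  ∀ w ∈ LangC B C, (Sat w φ₁ ↔ Sat w φ₂)

/-- Disjunction of a list of formulas. -/
def bigOr {Ap : Type} (l : List (F Ap)) : F Ap := l.foldr F.or F.ff

/-- Conjunction of a list of formulas. -/
def bigAnd {Ap : Type} (l : List (F Ap)) : F Ap := l.foldr F.and F.tt

variable {Ap : Type} [DecidableEq Ap]

/-- The set of subformulas of a formula. -/
def sf : F Ap → Finset (F Ap)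
  | F.tt => {F.tt}
  | F.ff => {F.ff}
  | F.pos a => {F.pos a}
  | F.nlit a => {F.nlit a}
  | F.and φ ψ => insert (F.and φ ψ) (sf φ ∪ sf ψ)
  | F.or φ ψ => insert (F.or φ ψ) (sf φ ∪ sf ψ)
  | F.next φ => insert (F.next φ) (sf φ)
  | F.untl φ ψ => insert (F.untl φ ψ) (sf φ ∪ sf ψ)
  | F.wuntl φ ψ => insert (F.wuntl φ ψ) (sf φ ∪ sf ψ)
  | F.rel φ ψ => insert (F.rel φ ψ) (sf φ ∪ sf ψ)
  | F.srel φ ψ => insert (F.srel φ ψ) (sf φ ∪ sf ψ)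

/-- `B_GF(φ) = { GF ψ : χ U ψ or ψ M χ is a subformula of φ }`. -/
def BGF (φ : F Ap) : Finset (F Ap) :=
  (sf φ).biUnion fun σ =>
    match σ with
    | F.untl _ ψ => {GFf ψ}
    | F.srel ψ _ => {GFf ψ}
    | _ => ∅

/-- `B_FG(φ) = { FG ψ : χ W ψ or ψ R χ is a subformula of φ }`. -/
def BFG (φ : F Ap) : Finset (F Ap) :=
  (sf φ).biUnion fun σ =>
    match σ with
    | F.wuntl _ ψ => {FGf ψ}
    | F.rel ψ _ => {FGf ψ}
    | _ => ∅

/-- The basis `B(φ) = B_GF(φ) ∪ B_FG(φ)`. -/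
def Bset (φ : F Ap) : Finset (F Ap) := BGF φ ∪ BFG φ

/-- The argument of a basis formula: `GF ψ ↦ ψ` and `FG ψ ↦ ψ`. -/
def innerArg : F Ap → F Ap
  | F.wuntl (F.untl F.tt ψ) F.ff => ψ      -- GF ψ
  | F.untl F.tt (F.wuntl ψ F.ff) => ψ      -- FG ψ
  | φ => φ

/-- `⇓ψ`: the basis formulas of `B(φ0)` strictly below `op(ψ)` in the order `≺`,
i.e. those whose argument is a subformula of `ψ`. -/
def down (φ0 ψ : F Ap) : Finset (F Ap) :=
  (Bset φ0).filter fun χ => innerArg χ ∈ sf ψ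

/-- The formula `eval(ψ, C)`. -/
def eval (C : Finset (F Ap)) : F Ap → F Ap
  | F.tt => F.tt
  | F.ff => F.ff
  | F.pos a => F.pos a
  | F.nlit a => F.nlit a
  | F.and φ ψ => F.and (eval C φ) (eval C ψ)
  | F.or φ ψ => F.or (eval C φ) (eval C ψ)
  | F.next φ => F.next (eval C φ)
  | F.wuntl φ ψ => F.wuntl (eval C φ) (eval C ψ)
  | F.rel φ ψ => F.rel (eval C φ) (eval C ψ)
  | F.untl φ ψ => if GFf ψ ∈ C then F.wuntl (eval C φ) (eval C ψ) else F.ff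
  | F.srel φ ψ => if GFf φ ∈ C then F.rel (eval C φ) (eval C ψ) else F.ff

/-!
On a word of the context `⟨C, B_GF⟩`, every `GF ψ ∈ C` holds and every `GF ψ ∈ B_GF \ C`
fails, so from some position on none of the latter `ψ` holds again. Hence `eval(φ, C)` entails `φ`
everywhere (an until whose goal recurs infinitely often is as good as a weak until), and `φ`
entails `eval(φ, C)` from that position on (an until whose goal never holds again is false).
So `G eval(φ, C)` implies `G φ`, and `G φ` implies that `G eval(φ, C)` holds at some position;
this is exactly what unrolling `φ W ψ` into `φ U (ψ ∨ G eval(φ, C))` (and dually for `R`) needs.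
-/

open Filter

section Semantics

variable {Ap : Type} {w : Word Ap} {φ φ' ψ ψ' : F Ap}

theorem suff_suff (w : Word Ap) (i k : ℕ) : suff (suff w i) k = suff w (k + i) := by
  funext n
  simp only [suff, Nat.add_assoc]

theorem sat_Gf : Sat w (Gf φ) ↔ ∀ k, Sat (suff w k) φ := by
  simp [Gf, Sat]

theorem sat_Ff : Sat w (Ff φ) ↔ ∃ k, Sat (suff w k) φ := by
  simp [Ff, Sat]

theorem sat_GFf : Sat w (GFf φ) ↔ ∀ k, Sat (suff w k) (Ff φ) :=
  sat_Gf

theorem sat_GFf_suff (k : ℕ) (h : Sat w (GFf φ)) : Sat (suff w k) (GFf φ) :=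
  sat_GFf.2 fun m => by rw [suff_suff]; exact sat_GFf.1 h _

theorem sat_Ff_of_sat_GFf (h : Sat w (GFf φ)) : Sat w (Ff φ) :=
  sat_GFf.1 h 0

theorem eventually_forall_not_sat_of_not_sat_GFf (h : ¬ Sat w (GFf φ)) :
    ∀ᶠ n in atTop, ∀ k, ¬ Sat (suff w (k + n)) φ := by
  obtain ⟨i, hi⟩ : ∃ i, ¬ Sat (suff w i) (Ff φ) := by simpa [sat_GFf] using h
  refine eventually_atTop.2 ⟨i, fun n hn k hk => hi (sat_Ff.2 ⟨k + (n - i), ?_⟩)⟩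
  rwa [suff_suff, Nat.add_assoc, Nat.sub_add_cancel hn]

theorem GFf_injective : Function.Injective (GFf : F Ap → F Ap) := by
  intro φ ψ h
  simpa [GFf, Gf, Ff] using h

theorem forall_sat_of_forall_lt {k : ℕ} (hlt : ∀ j < k, Sat (suff w j) φ)
    (hk : Sat (suff w k) (Gf φ)) (j : ℕ) : Sat (suff w j) φ := by
  rcases lt_or_ge j k with hj | hj
  · exact hlt j hj
  · simpa [suff_suff, Nat.sub_add_cancel hj] using sat_Gf.1 hk (j - k)

theorem sat_untl_mono (hφ : ∀ k, Sat (suff w k) φ → Sat (suff w k) φ')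
    (hψ : ∀ k, Sat (suff w k) ψ → Sat (suff w k) ψ') :
    Sat w (F.untl φ ψ) → Sat w (F.untl φ' ψ') :=
  fun ⟨k, hk, hlt⟩ => ⟨k, hψ k hk, fun j hj => hφ j (hlt j hj)⟩

theorem sat_wuntl_mono (hφ : ∀ k, Sat (suff w k) φ → Sat (suff w k) φ')
    (hψ : ∀ k, Sat (suff w k) ψ → Sat (suff w k) ψ') :
    Sat w (F.wuntl φ ψ) → Sat w (F.wuntl φ' ψ') :=
  Or.imp (fun hG k => hφ k (hG k)) (sat_untl_mono hφ hψ)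

theorem sat_srel_mono (hφ : ∀ k, Sat (suff w k) φ → Sat (suff w k) φ')
    (hψ : ∀ k, Sat (suff w k) ψ → Sat (suff w k) ψ') :
    Sat w (F.srel φ ψ) → Sat w (F.srel φ' ψ') :=
  fun ⟨k, hk, hle⟩ => ⟨k, hφ k hk, fun j hj => hψ j (hle j hj)⟩

theorem sat_rel_mono (hφ : ∀ k, Sat (suff w k) φ → Sat (suff w k) φ')
    (hψ : ∀ k, Sat (suff w k) ψ → Sat (suff w k) ψ') :
    Sat w (F.rel φ ψ) → Sat w (F.rel φ' ψ') :=
  Or.imp (fun hG k => hψ k (hG k)) (sat_srel_mono hφ hψ)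

theorem sat_untl_of_sat_wuntl (hψ : Sat w (Ff ψ)) (h : Sat w (F.wuntl φ ψ)) :
    Sat w (F.untl φ ψ) := by
  rcases h with hG | hU
  · obtain ⟨k, hk⟩ := sat_Ff.1 hψ
    exact ⟨k, hk, fun j _ => hG j⟩
  · exact hU

theorem sat_srel_of_sat_rel (hφ : Sat w (Ff φ)) (h : Sat w (F.rel φ ψ)) :
    Sat w (F.srel φ ψ) := by
  rcases h with hG | hM
  · obtain ⟨k, hk⟩ := sat_Ff.1 hφ
    exact ⟨k, hk, fun j _ => hG j⟩
  · exact hM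

theorem sat_wuntl_iff_sat_untl_or_Gf {θ : F Ap}
    (hsound : ∀ k, Sat (suff w k) (Gf θ) → Sat (suff w k) (Gf φ))
    (hcomplete : Sat w (Gf φ) → ∃ N, Sat (suff w N) (Gf θ)) :
    Sat w (F.wuntl φ ψ) ↔ Sat w (F.untl φ (F.or ψ (Gf θ))) := by
  constructor
  · rintro (hG | ⟨k, hk, hlt⟩)
    · obtain ⟨N, hN⟩ := hcomplete (sat_Gf.2 hG)
      exact ⟨N, Or.inr hN, fun j _ => hG j⟩
    · exact ⟨k, Or.inl hk, hlt⟩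
  · rintro ⟨k, hk | hk, hlt⟩
    · exact Or.inr ⟨k, hk, hlt⟩
    · exact Or.inl (forall_sat_of_forall_lt hlt (hsound k hk))

theorem sat_rel_iff_sat_srel_or_Gf {θ : F Ap}
    (hsound : ∀ k, Sat (suff w k) (Gf θ) → Sat (suff w k) (Gf ψ))
    (hcomplete : Sat w (Gf ψ) → ∃ N, Sat (suff w N) (Gf θ)) :
    Sat w (F.rel φ ψ) ↔ Sat w (F.srel (F.or φ (Gf θ)) ψ) := by
  constructor
  · rintro (hG | ⟨k, hk, hle⟩)
    · obtain ⟨N, hN⟩ := hcomplete (sat_Gf.2 hG)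
      exact ⟨N, Or.inr hN, fun j _ => hG j⟩
    · exact ⟨k, Or.inl hk, hle⟩
  · rintro ⟨k, hk | hk, hle⟩
    · exact Or.inr ⟨k, hk, hle⟩
    · exact Or.inl (forall_sat_of_forall_lt (fun j hj => hle j hj.le) (hsound k hk))

end Semantics

section Context

variable {Ap : Type} {B B' C : Finset (F Ap)} {w : Word Ap} {ψ : F Ap}

def Recurrent (C : Finset (F Ap)) (w : Word Ap) : Prop :=
  ∀ ψ, GFf ψ ∈ C → Sat w (GFf ψ)

/-- Every `GF ψ ∈ B \ C` has already seen the last witness of `ψ` in `w`. -/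
def Settled (B C : Finset (F Ap)) (w : Word Ap) : Prop :=
  ∀ ψ, GFf ψ ∈ B → GFf ψ ∉ C → ∀ k, ¬ Sat (suff w k) ψ

theorem Recurrent.suff (h : Recurrent C w) (i : ℕ) : Recurrent C (suff w i) :=
  fun ψ hψ => sat_GFf_suff i (h ψ hψ)

theorem Settled.suff (h : Settled B C w) (i : ℕ) : Settled B C (suff w i) :=
  fun ψ hB hC k => by rw [suff_suff]; exact h ψ hB hC _

theorem Settled.mono (hB : B' ⊆ B) (h : Settled B C w) : Settled B' C w :=
  fun ψ hψ => h ψ (hB hψ)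

theorem recurrent_of_mem_LangC (hw : w ∈ LangC B C) : Recurrent C w :=
  fun ψ => hw.1 (GFf ψ)

variable [DecidableEq Ap]

theorem settled_union {B₁ B₂ : Finset (F Ap)} :
    Settled (B₁ ∪ B₂) C w ↔ Settled B₁ C w ∧ Settled B₂ C w := by
  simp only [Settled, Finset.mem_union]
  grind

theorem settled_insert :
    Settled (insert (GFf ψ) B) C w ↔
      (GFf ψ ∉ C → ∀ k, ¬ Sat (suff w k) ψ) ∧ Settled B C w := by
  simp only [Settled, Finset.mem_insert, GFf_injective.eq_iff]
  grind

theorem eventually_settled_of_mem_LangC (hw : w ∈ LangC B C) :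
    ∀ᶠ n in atTop, Settled B C (suff w n) := by
  have hχ : ∀ χ ∈ B \ C, ∀ᶠ n in atTop, ∀ ψ, χ = GFf ψ → ∀ k, ¬ Sat (suff (suff w n) k) ψ := by
    intro χ hχ
    rw [Finset.mem_sdiff] at hχ
    by_cases hGF : ∃ ψ, χ = GFf ψ
    · obtain ⟨ψ, rfl⟩ := hGF
      filter_upwards [eventually_forall_not_sat_of_not_sat_GFf (hw.2 _ hχ.1 hχ.2)]
        with n hn ψ' hψ' k
      rw [← GFf_injective hψ', suff_suff]
      exact hn k
    · exact Eventually.of_forall fun n ψ hψ => (hGF ⟨ψ, hψ⟩).elim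
  filter_upwards [(eventually_all_finset _).2 hχ] with n hn ψ hB hC
  exact hn _ (Finset.mem_sdiff.2 ⟨hB, hC⟩) ψ rfl

end Context

section Eval

variable {Ap : Type} [DecidableEq Ap] {B C : Finset (F Ap)} {w : Word Ap} {φ ψ : F Ap}

theorem BGF_and : BGF (F.and φ ψ) = BGF φ ∪ BGF ψ := by
  simp [BGF, sf, Finset.biUnion_insert, Finset.union_biUnion]

theorem BGF_or : BGF (F.or φ ψ) = BGF φ ∪ BGF ψ := by
  simp [BGF, sf, Finset.biUnion_insert, Finset.union_biUnion]

theorem BGF_next : BGF (F.next φ) = BGF φ := by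
  simp [BGF, sf, Finset.biUnion_insert]

theorem BGF_untl : BGF (F.untl φ ψ) = insert (GFf ψ) (BGF φ ∪ BGF ψ) := by
  simp [BGF, sf, Finset.biUnion_insert, Finset.union_biUnion]

theorem BGF_wuntl : BGF (F.wuntl φ ψ) = BGF φ ∪ BGF ψ := by
  simp [BGF, sf, Finset.biUnion_insert, Finset.union_biUnion]

theorem BGF_rel : BGF (F.rel φ ψ) = BGF φ ∪ BGF ψ := by
  simp [BGF, sf, Finset.biUnion_insert, Finset.union_biUnion]

theorem BGF_srel : BGF (F.srel φ ψ) = insert (GFf φ) (BGF φ ∪ BGF ψ) := by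
  simp [BGF, sf, Finset.biUnion_insert, Finset.union_biUnion]

theorem sat_of_sat_eval (hw : Recurrent C w) (h : Sat w (eval C φ)) : Sat w φ := by
  induction φ generalizing w with
  | tt | ff | pos | nlit => exact h
  | and φ ψ ihφ ihψ => exact ⟨ihφ hw h.1, ihψ hw h.2⟩
  | or φ ψ ihφ ihψ => exact h.imp (ihφ hw) (ihψ hw)
  | next φ ih => exact ih (hw.suff 1) h
  | untl φ ψ ihφ ihψ =>
    rw [eval] at h
    split_ifs at h with hψ
    · exact sat_untl_of_sat_wuntl (sat_Ff_of_sat_GFf (hw ψ hψ))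
        (sat_wuntl_mono (fun k => ihφ (hw.suff k)) (fun k => ihψ (hw.suff k)) h)
    · exact h.elim
  | wuntl φ ψ ihφ ihψ =>
    exact sat_wuntl_mono (fun k => ihφ (hw.suff k)) (fun k => ihψ (hw.suff k)) h
  | rel φ ψ ihφ ihψ =>
    exact sat_rel_mono (fun k => ihφ (hw.suff k)) (fun k => ihψ (hw.suff k)) h
  | srel φ ψ ihφ ihψ =>
    rw [eval] at h
    split_ifs at h with hφ
    · exact sat_srel_of_sat_rel (sat_Ff_of_sat_GFf (hw φ hφ))
        (sat_rel_mono (fun k => ihφ (hw.suff k)) (fun k => ihψ (hw.suff k)) h)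
    · exact h.elim

theorem sat_eval_of_sat (hw : Settled (BGF φ) C w) (h : Sat w φ) : Sat w (eval C φ) := by
  induction φ generalizing w with
  | tt | ff | pos | nlit => exact h
  | and φ ψ ihφ ihψ =>
    rw [BGF_and, settled_union] at hw
    exact ⟨ihφ hw.1 h.1, ihψ hw.2 h.2⟩
  | or φ ψ ihφ ihψ =>
    rw [BGF_or, settled_union] at hw
    exact h.imp (ihφ hw.1) (ihψ hw.2)
  | next φ ih =>
    rw [BGF_next] at hw
    exact ih (hw.suff 1) h
  | untl φ ψ ihφ ihψ =>
    rw [BGF_untl, settled_insert, settled_union] at hw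
    obtain ⟨hψ, hwφ, hwψ⟩ := hw
    rw [eval]
    split_ifs with hC
    · exact Or.inr (sat_untl_mono (fun k => ihφ (hwφ.suff k)) (fun k => ihψ (hwψ.suff k)) h)
    · obtain ⟨k, hk, -⟩ := h
      exact hψ hC k hk
  | wuntl φ ψ ihφ ihψ =>
    rw [BGF_wuntl, settled_union] at hw
    exact sat_wuntl_mono (fun k => ihφ (hw.1.suff k)) (fun k => ihψ (hw.2.suff k)) h
  | rel φ ψ ihφ ihψ =>
    rw [BGF_rel, settled_union] at hw
    exact sat_rel_mono (fun k => ihφ (hw.1.suff k)) (fun k => ihψ (hw.2.suff k)) h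
  | srel φ ψ ihφ ihψ =>
    rw [BGF_srel, settled_insert, settled_union] at hw
    obtain ⟨hφ, hwφ, hwψ⟩ := hw
    rw [eval]
    split_ifs with hC
    · exact Or.inr (sat_srel_mono (fun k => ihφ (hwφ.suff k)) (fun k => ihψ (hwψ.suff k)) h)
    · obtain ⟨k, hk, -⟩ := h
      exact hφ hC k hk

theorem sat_Gf_of_sat_Gf_eval (hw : Recurrent C w) (h : Sat w (Gf (eval C φ))) :
    Sat w (Gf φ) :=
  sat_Gf.2 fun k => sat_of_sat_eval (hw.suff k) (sat_Gf.1 h k)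

theorem exists_sat_Gf_eval_of_sat_Gf (hw : ∀ᶠ n in atTop, Settled B C (suff w n))
    (hB : BGF φ ⊆ B) (h : Sat w (Gf φ)) : ∃ N, Sat (suff w N) (Gf (eval C φ)) := by
  obtain ⟨N, hN⟩ := hw.exists
  refine ⟨N, sat_Gf.2 fun k => sat_eval_of_sat ((hN.mono hB).suff k) ?_⟩
  rw [suff_suff]
  exact sat_Gf.1 h _

end Eval

theorem flatten_WR_lemma_general {Ap : Type} [DecidableEq Ap] (ψ₁ ψ₂ : F Ap) :
    (∀ C ⊆ BGF (F.wuntl ψ₁ ψ₂),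
      EquivUnder (BGF (F.wuntl ψ₁ ψ₂)) C (F.wuntl ψ₁ ψ₂)
        (F.untl ψ₁ (F.or ψ₂ (Gf (eval C ψ₁))))) ∧
    (∀ C ⊆ BGF (F.rel ψ₁ ψ₂),
      EquivUnder (BGF (F.rel ψ₁ ψ₂)) C (F.rel ψ₁ ψ₂)
        (F.srel (F.or ψ₁ (Gf (eval C ψ₂))) ψ₂)) := by
  constructor
  · intro C _ w hw
    exact sat_wuntl_iff_sat_untl_or_Gf
      (fun k => sat_Gf_of_sat_Gf_eval ((recurrent_of_mem_LangC hw).suff k))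
      (exists_sat_Gf_eval_of_sat_Gf (eventually_settled_of_mem_LangC hw)
        (by simp [BGF_wuntl]))
  · intro C _ w hw
    exact sat_rel_iff_sat_srel_or_Gf
      (fun k => sat_Gf_of_sat_Gf_eval ((recurrent_of_mem_LangC hw).suff k))
      (exists_sat_Gf_eval_of_sat_Gf (eventually_settled_of_mem_LangC hw)
        (by simp [BGF_rel]))

/-- contextual unrollings of `W` and `R`. -/
theorem flatten_WR_lemma {Ap : Type} [Fintype Ap] [DecidableEq Ap] (ψ₁ ψ₂ : F Ap) :
    (∀ C ⊆ BGF (F.wuntl ψ₁ ψ₂),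
      EquivUnder (BGF (F.wuntl ψ₁ ψ₂)) C (F.wuntl ψ₁ ψ₂)
        (F.untl ψ₁ (F.or ψ₂ (Gf (eval C ψ₁))))) ∧
    (∀ C ⊆ BGF (F.rel ψ₁ ψ₂),
      EquivUnder (BGF (F.rel ψ₁ ψ₂)) C (F.rel ψ₁ ψ₂)
        (F.srel (F.or ψ₁ (Gf (eval C ψ₂))) ψ₂)) :=
  flatten_WR_lemma_general ψ₁ ψ₂

end LTLNorm
end

section
/- For every extended LTL formula with placeholders φ and all formulas ψ₁, ψ₂: (1) GF φ[ψ₁ W ψ₂] ≡ GF φ[ψ₁ U ψ₂] ∨ (FG ψ₁ ∧ GF φ[tt]); (2) FG φ[ψ₁ U ψ₂] ≡ (GF ψ₂ ∧ FG φ[ψ₁ W ψ₂]) ∨ FG φ[ff]. -/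
namespace ExtLTL

/-- Extended LTL formulas, with the limit operators `GF` and `FG` as atomic
operators. -/
inductive E (Ap : Type) : Type
  | tt    : E Ap
  | ff    : E Ap
  | pos   : Ap → E Ap
  | nlit  : Ap → E Ap
  | and   : E Ap → E Ap → E Ap
  | or    : E Ap → E Ap → E Ap
  | next  : E Ap → E Ap
  | untl  : E Ap → E Ap → E Ap
  | wuntl : E Ap → E Ap → E Ap
  | gf    : E Ap → E Ap
  | fg    : E Ap → E Ap
  deriving DecidableEq

/-- Infinite words over the alphabet `2^Ap`. -/
abbrev Word (Ap : Type) := ℕ → Set Ap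

/-- Suffix of a word starting at position `i`. -/
def suff {Ap : Type} (w : Word Ap) (i : ℕ) : Word Ap := fun n => w (n + i)

/-- Satisfaction relation for extended LTL. -/
def Sat {Ap : Type} : Word Ap → E Ap → Prop
  | _, E.tt => True
  | _, E.ff => False
  | w, E.pos a => a ∈ w 0
  | w, E.nlit a => a ∉ w 0
  | w, E.and φ ψ => Sat w φ ∧ Sat w ψ
  | w, E.or φ ψ => Sat w φ ∨ Sat w ψ
  | w, E.next φ => Sat (suff w 1) φ
  | w, E.untl φ ψ => ∃ k, Sat (suff w k) ψ ∧ ∀ j < k, Sat (suff w j) φ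
  | w, E.wuntl φ ψ => (∀ k, Sat (suff w k) φ) ∨ ∃ k, Sat (suff w k) ψ ∧ ∀ j < k, Sat (suff w j) φ
  | w, E.gf φ => ∀ i : ℕ, ∃ j : ℕ, i ≤ j ∧ Sat (suff w j) φ
  | w, E.fg φ => ∃ i : ℕ, ∀ j : ℕ, i ≤ j → Sat (suff w j) φ

/-- Equivalence of extended LTL formulas. -/
def Equiv {Ap : Type} (φ ψ : E Ap) : Prop := ∀ w : Word Ap, Sat w φ ↔ Sat w ψ

/-- G φ := φ W ff. -/
def Gf {Ap : Type} (φ : E Ap) : E Ap := E.wuntl φ E.ff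

/-- Number of nodes of the syntax tree. -/
def size {Ap : Type} : E Ap → ℕ
  | E.tt => 1
  | E.ff => 1
  | E.pos _ => 1
  | E.nlit _ => 1
  | E.and φ ψ => size φ + size ψ + 1
  | E.or φ ψ => size φ + size ψ + 1
  | E.next φ => size φ + 1
  | E.untl φ ψ => size φ + size ψ + 1
  | E.wuntl φ ψ => size φ + size ψ + 1
  | E.gf φ => size φ + 1
  | E.fg φ => size φ + 1

/-- Formulas with placeholders: extended LTL formulas over `Option Ap`, where
the extra atomic proposition `pos none` is the placeholder `[·]`. -/
abbrev EP (Ap : Type) := E (Option Ap)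

/-- The placeholder occurs only positively (never negated). -/
def posOnly {Ap : Type} : EP Ap → Prop
  | E.nlit none => False
  | E.and φ ψ => posOnly φ ∧ posOnly ψ
  | E.or φ ψ => posOnly φ ∧ posOnly ψ
  | E.next φ => posOnly φ
  | E.untl φ ψ => posOnly φ ∧ posOnly ψ
  | E.wuntl φ ψ => posOnly φ ∧ posOnly ψ
  | E.gf φ => posOnly φ
  | E.fg φ => posOnly φ
  | _ => True

/-- `subst φ ψ = φ[ψ]`: substitute `ψ` for every occurrence of the placeholder
in `φ`. -/
def subst {Ap : Type} : EP Ap → E Ap → E Ap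
  | E.tt, _ => E.tt
  | E.ff, _ => E.ff
  | E.pos none, ψ => ψ
  | E.pos (some a), _ => E.pos a
  | E.nlit none, _ => E.ff    -- never occurs in a formula with positive placeholders
  | E.nlit (some a), _ => E.nlit a
  | E.and φ₁ φ₂, ψ => E.and (subst φ₁ ψ) (subst φ₂ ψ)
  | E.or φ₁ φ₂, ψ => E.or (subst φ₁ ψ) (subst φ₂ ψ)
  | E.next φ, ψ => E.next (subst φ ψ)
  | E.untl φ₁ φ₂, ψ => E.untl (subst φ₁ ψ) (subst φ₂ ψ)
  | E.wuntl φ₁ φ₂, ψ => E.wuntl (subst φ₁ ψ) (subst φ₂ ψ)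
  | E.gf φ, ψ => E.gf (subst φ ψ)
  | E.fg φ, ψ => E.fg (subst φ ψ)

open Filter

/-!
Along a word `w`, `GF χ` and `FG χ` only depend on the truth values of `χ` at the suffixes of `w`
from some point on, and `φ[·]` is monotone in its argument because the placeholder occurs only
positively. So each direction of (1) and (2) reduces to an implication between two possible
arguments of `φ[·]` that holds at all late suffixes. For (1): if `FG ψ₁` holds, then `ψ₁ W ψ₂`
eventually holds outright; otherwise `G ψ₁` fails at every suffix, where `ψ₁ W ψ₂` thus collapses
to `ψ₁ U ψ₂`. For (2): if `GF ψ₂` holds, `ψ₂` occurs after every position, so `ψ₁ W ψ₂` collapses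
to `ψ₁ U ψ₂`; otherwise `ψ₁ U ψ₂` is eventually false, i.e. equivalent to `ff`.
-/

section

variable {Ap : Type}

@[simp]
theorem suff_suff (w : Word Ap) (i k : ℕ) : suff (suff w i) k = suff w (k + i) := by
  funext n; simp [suff, Nat.add_assoc]

def ImpOnSuffixes (w : Word Ap) (ψ ψ' : E Ap) : Prop :=
  ∀ k, Sat (suff w k) ψ → Sat (suff w k) ψ'

theorem ImpOnSuffixes.suff {w : Word Ap} {ψ ψ' : E Ap} (h : ImpOnSuffixes w ψ ψ') (i : ℕ) :
    ImpOnSuffixes (suff w i) ψ ψ' := fun k => by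
  rw [suff_suff]; exact h _

theorem sat_gf_iff_frequently {w : Word Ap} {φ : E Ap} :
    Sat w (E.gf φ) ↔ ∃ᶠ k in atTop, Sat (suff w k) φ :=
  frequently_atTop.symm

theorem sat_fg_iff_eventually {w : Word Ap} {φ : E Ap} :
    Sat w (E.fg φ) ↔ ∀ᶠ k in atTop, Sat (suff w k) φ :=
  eventually_atTop.symm

theorem sat_subst_mono {ψ ψ' : E Ap} {φ : EP Ap} (hφ : posOnly φ) {w : Word Ap}
    (h : ImpOnSuffixes w ψ ψ') :
    Sat w (subst φ ψ) → Sat w (subst φ ψ') := by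
  induction φ generalizing w with
  | tt | ff => exact id
  | pos a =>
    cases a with
    | none => exact h 0
    | some a => exact id
  | nlit a =>
    cases a with
    | none => exact hφ.elim
    | some a => exact id
  | and φ₁ φ₂ ih₁ ih₂ => exact And.imp (ih₁ hφ.1 h) (ih₂ hφ.2 h)
  | or φ₁ φ₂ ih₁ ih₂ => exact Or.imp (ih₁ hφ.1 h) (ih₂ hφ.2 h)
  | next φ ih => exact ih hφ (h.suff 1)
  | untl φ₁ φ₂ ih₁ ih₂ =>
    exact Exists.imp fun k => And.imp (ih₂ hφ.2 (h.suff k))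
      fun hlt j hj => ih₁ hφ.1 (h.suff j) (hlt j hj)
  | wuntl φ₁ φ₂ ih₁ ih₂ =>
    refine Or.imp (fun hG k => ih₁ hφ.1 (h.suff k) (hG k)) ?_
    exact Exists.imp fun k => And.imp (ih₂ hφ.2 (h.suff k))
      fun hlt j hj => ih₁ hφ.1 (h.suff j) (hlt j hj)
  | gf φ ih =>
    exact fun hgf i => (hgf i).imp fun j => And.imp_right (ih hφ (h.suff j))
  | fg φ ih =>
    exact Exists.imp fun i hi j hij => ih hφ (h.suff j) (hi j hij)

theorem eventually_sat_subst_imp {ψ ψ' : E Ap} {φ : EP Ap} (hφ : posOnly φ) {w : Word Ap}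
    (h : ∀ᶠ k in atTop, Sat (suff w k) ψ → Sat (suff w k) ψ') :
    ∀ᶠ k in atTop, Sat (suff w k) (subst φ ψ) → Sat (suff w k) (subst φ ψ') := by
  obtain ⟨i, hi⟩ := eventually_atTop.1 h
  refine eventually_atTop.2 ⟨i, fun k hik => sat_subst_mono hφ fun m => ?_⟩
  rw [suff_suff]
  exact hi _ (by omega)

theorem sat_gf_subst_of_eventually {ψ ψ' : E Ap} {φ : EP Ap} (hφ : posOnly φ) {w : Word Ap}
    (h : ∀ᶠ k in atTop, Sat (suff w k) ψ → Sat (suff w k) ψ') :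
    Sat w (E.gf (subst φ ψ)) → Sat w (E.gf (subst φ ψ')) := by
  simp only [sat_gf_iff_frequently]
  exact fun hgf => hgf.mp (eventually_sat_subst_imp hφ h)

theorem sat_fg_subst_of_eventually {ψ ψ' : E Ap} {φ : EP Ap} (hφ : posOnly φ) {w : Word Ap}
    (h : ∀ᶠ k in atTop, Sat (suff w k) ψ → Sat (suff w k) ψ') :
    Sat w (E.fg (subst φ ψ)) → Sat w (E.fg (subst φ ψ')) := by
  simp only [sat_fg_iff_eventually]
  exact fun hfg => hfg.mp (eventually_sat_subst_imp hφ h)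

variable {w : Word Ap} {ψ₁ ψ₂ : E Ap}

theorem sat_wuntl_of_untl {v : Word Ap} : Sat v (E.untl ψ₁ ψ₂) → Sat v (E.wuntl ψ₁ ψ₂) :=
  Or.inr

theorem sat_fg_of_forall_suff_suff (k : ℕ) (h : ∀ m, Sat (suff (suff w k) m) ψ₁) :
    Sat w (E.fg ψ₁) :=
  ⟨k, fun j hkj => by simpa [Nat.sub_add_cancel hkj] using h (j - k)⟩

theorem sat_untl_of_wuntl_of_not_fg (hfg : ¬ Sat w (E.fg ψ₁)) (k : ℕ)
    (h : Sat (suff w k) (E.wuntl ψ₁ ψ₂)) : Sat (suff w k) (E.untl ψ₁ ψ₂) :=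
  h.resolve_left fun hG => hfg (sat_fg_of_forall_suff_suff k hG)

theorem eventually_sat_wuntl_of_fg (hfg : Sat w (E.fg ψ₁)) :
    ∀ᶠ k in atTop, Sat (suff w k) (E.wuntl ψ₁ ψ₂) := by
  obtain ⟨i, hi⟩ := hfg
  refine eventually_atTop.2 ⟨i, fun k hik => Or.inl fun m => ?_⟩
  rw [suff_suff]
  exact hi _ (by omega)

theorem sat_untl_of_wuntl_of_gf (hgf : Sat w (E.gf ψ₂)) (k : ℕ)
    (h : Sat (suff w k) (E.wuntl ψ₁ ψ₂)) : Sat (suff w k) (E.untl ψ₁ ψ₂) := by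
  refine h.elim (fun hG => ?_) id
  obtain ⟨m, hkm, hm⟩ := hgf k
  exact ⟨m - k, by rwa [suff_suff, Nat.sub_add_cancel hkm], fun j _ => hG j⟩

theorem eventually_not_sat_untl_of_not_gf (hgf : ¬ Sat w (E.gf ψ₂)) :
    ∀ᶠ k in atTop, ¬ Sat (suff w k) (E.untl ψ₁ ψ₂) := by
  rw [sat_gf_iff_frequently, not_frequently] at hgf
  obtain ⟨i, hi⟩ := eventually_atTop.1 hgf
  refine eventually_atTop.2 ⟨i, fun k hik ⟨m, hm, _⟩ => hi (m + k) (by omega) ?_⟩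
  rwa [suff_suff] at hm

end

theorem fix_limit_subformulas_general {Ap : Type} :
    ∀ φ : EP Ap, posOnly φ → ∀ ψ₁ ψ₂ : E Ap,
      -- (1)  GF φ[ψ₁ W ψ₂] ≡ GF φ[ψ₁ U ψ₂] ∨ (FG ψ₁ ∧ GF φ[tt])
      Equiv (E.gf (subst φ (E.wuntl ψ₁ ψ₂)))
            (E.or (E.gf (subst φ (E.untl ψ₁ ψ₂)))
                  (E.and (E.fg ψ₁) (E.gf (subst φ E.tt)))) ∧
      -- (2)  FG φ[ψ₁ U ψ₂] ≡ (GF ψ₂ ∧ FG φ[ψ₁ W ψ₂]) ∨ FG φ[ff]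
      Equiv (E.fg (subst φ (E.untl ψ₁ ψ₂)))
            (E.or (E.and (E.gf ψ₂) (E.fg (subst φ (E.wuntl ψ₁ ψ₂))))
                  (E.fg (subst φ E.ff))) := by
  intro φ hφ ψ₁ ψ₂
  refine ⟨fun w => ⟨fun h => ?_, fun h => ?_⟩, fun w => ⟨fun h => ?_, fun h => ?_⟩⟩
  · by_cases hfg : Sat w (E.fg ψ₁)
    · exact Or.inr ⟨hfg, sat_gf_subst_of_eventually hφ (.of_forall fun _ _ => trivial) h⟩
    · exact Or.inl <| sat_gf_subst_of_eventually hφ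
        (.of_forall (sat_untl_of_wuntl_of_not_fg hfg)) h
  · rcases h with h | ⟨hfg, h⟩
    · exact sat_gf_subst_of_eventually hφ (.of_forall fun _ => sat_wuntl_of_untl) h
    · exact sat_gf_subst_of_eventually hφ ((eventually_sat_wuntl_of_fg hfg).mono
        fun _ hW _ => hW) h
  · by_cases hgf : Sat w (E.gf ψ₂)
    · exact Or.inl ⟨hgf, sat_fg_subst_of_eventually hφ (.of_forall fun _ => sat_wuntl_of_untl) h⟩
    · exact Or.inr <| sat_fg_subst_of_eventually hφ ((eventually_not_sat_untl_of_not_gf hgf).mono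
        fun _ hnU hU => hnU hU) h
  · rcases h with ⟨hgf, h⟩ | h
    · exact sat_fg_subst_of_eventually hφ (.of_forall (sat_untl_of_wuntl_of_gf hgf)) h
    · exact sat_fg_subst_of_eventually hφ (.of_forall fun _ => False.elim) h

/-- removing `W` under `GF` and `U` under `FG`. -/
theorem fix_limit_subformulas {Ap : Type} [Fintype Ap] :
    ∀ φ : EP Ap, posOnly φ → ∀ ψ₁ ψ₂ : E Ap,
      -- (1)  GF φ[ψ₁ W ψ₂] ≡ GF φ[ψ₁ U ψ₂] ∨ (FG ψ₁ ∧ GF φ[tt])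
      Equiv (E.gf (subst φ (E.wuntl ψ₁ ψ₂)))
            (E.or (E.gf (subst φ (E.untl ψ₁ ψ₂)))
                  (E.and (E.fg ψ₁) (E.gf (subst φ E.tt)))) ∧
      -- (2)  FG φ[ψ₁ U ψ₂] ≡ (GF ψ₂ ∧ FG φ[ψ₁ W ψ₂]) ∨ FG φ[ff]
      Equiv (E.fg (subst φ (E.untl ψ₁ ψ₂)))
            (E.or (E.and (E.gf ψ₂) (E.fg (subst φ (E.wuntl ψ₁ ψ₂))))
                  (E.fg (subst φ E.ff))) :=
  fix_limit_subformulas_general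

end ExtLTL
end
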